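/- arXiv:2511.08208 — 6 statements merged into one kernel-verified Lean document; each statement's English description precedes it below -/
import Mathlib

section
/- Let 𝓔 be any family of word equations. If a finite semigroup S is nice for 𝓔 and ρ : S → S' is a surjective semigroup homomorphism onto a semigroup S', then S' is nice for 𝓔. -/
namespace WordEq

variable {C X S : Type*}

/-- `spow u n = u^(n+1)` : positive powers in a semigroup. -/
def spow [Mul S] (u : S) : ℕ → S
  | 0 => u
  | n + 1 => spow u n * u

/-- `e` is the ω-power of `u`, i.e. the (unique) idempotent among the
positive powers `u, u², u³, …` of `u`. -/
def IsOmega [Mul S] (u e : S) : Prop := (∃ n : ℕ, spow u n = e) ∧ e * e = e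

/-- Extension of a substitution `σ : 𝒳 → Σ⁺` to words over `Ω = Σ ⊎ 𝒳`,
fixing the constants. -/
def subst (σ : X → List C) (w : List (C ⊕ X)) : List C :=
  w.flatMap (Sum.elim (fun a => [a]) σ)

/-- `p^k` occurs as a factor of `w`. -/
def hasPowFactor (w p : List C) (k : ℕ) : Prop :=
  ∃ u v : List C, w = u ++ (List.replicate k p).flatten ++ v

/-- The exponent of periodicity of a word: the largest `k` such that `p^k`
is a factor of `w` for some nonempty `p`. -/
noncomputable def expWord (w : List C) : ℕ :=
  sSup {k : ℕ | ∃ p : List C, p ≠ [] ∧ hasPowFactor w p k}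

/-- The exponent of periodicity of a substitution. -/
noncomputable def expSub [Fintype X] (σ : X → List C) : ℕ :=
  Finset.univ.sup fun x : X => expWord (σ x)

/-- `μ` is (the restriction to nonempty words of) a semigroup homomorphism
`Ω⁺ → S`. -/
def IsConstraint [Mul S] (μ : List (C ⊕ X) → S) : Prop :=
  ∀ u v : List (C ⊕ X), u ≠ [] → v ≠ [] → μ (u ++ v) = μ u * μ v

/-- `σ : 𝒳 → Σ⁺` is a solution of the word equation `U = V`. -/
def IsSolution (U V : List (C ⊕ X)) (σ : X → List C) : Prop :=
  (∀ x : X, σ x ≠ []) ∧ subst σ U = subst σ V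

/-- `σ` is a solution of the word equation `U = V` with constraint `μ`. -/
def IsSolutionC [Mul S] (U V : List (C ⊕ X)) (μ : List (C ⊕ X) → S)
    (σ : X → List C) : Prop :=
  IsSolution U V σ ∧ ∀ x : X, μ ((σ x).map Sum.inl) = μ [Sum.inr x]

/-- Each variable occurs at most twice in `UV`. -/
def Quadratic [DecidableEq C] [DecidableEq X] (U V : List (C ⊕ X)) : Prop :=
  ∀ x : X, (U ++ V).count (Sum.inr x) ≤ 2

/-- A finite semigroup `S` is *nice* for a family `E` of word equations
(over arbitrary finite alphabets of constants and variables):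
whenever an equation of the family with a regular constraint in `S` has
infinitely many solutions, it has solutions of arbitrarily large exponent
of periodicity. -/
def Nice (S : Type) [Semigroup S]
    (E : ∀ (C X : Type), List (C ⊕ X) → List (C ⊕ X) → Prop) : Prop :=
  ∀ (C X : Type) [Fintype C] [Fintype X] (U V : List (C ⊕ X)),
    E C X U V → U ≠ [] → V ≠ [] →
    ∀ μ : List (C ⊕ X) → S, IsConstraint μ →
      {σ : X → List C | IsSolutionC U V μ σ}.Infinite →
      ∀ n : ℕ, ∃ σ : X → List C, IsSolutionC U V μ σ ∧ n ≤ expSub σ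

section Aux

variable {A S₁ S₂ : Type*}

/-- Multiplicative extension of `f` to nonempty lists (with default `d` on `[]`). -/
private def extF [Semigroup S₁] (d : S₁) (f : A → S₁) : List A → S₁
  | [] => d
  | a :: l => l.foldl (fun s b => s * f b) (f a)

private theorem foldl_mul_assoc [Semigroup S₁] (f : A → S₁) (l : List A) (s t : S₁) :
    l.foldl (fun s b => s * f b) (s * t) = s * l.foldl (fun s b => s * f b) t := by
  induction l generalizing t with
  | nil => rfl
  | cons a l ih => simp only [List.foldl_cons]; rw [mul_assoc, ih]

private theorem extF_append [Semigroup S₁] (d : S₁) (f : A → S₁) {u v : List A}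
    (hu : u ≠ []) (hv : v ≠ []) :
    extF d f (u ++ v) = extF d f u * extF d f v := by
  obtain ⟨a, u, rfl⟩ := List.exists_cons_of_ne_nil hu
  obtain ⟨b, v, rfl⟩ := List.exists_cons_of_ne_nil hv
  simp only [extF, List.cons_append, List.foldl_append, List.foldl_cons]
  rw [foldl_mul_assoc]

private theorem extF_congr [Semigroup S₁] (d : S₁) {f g : A → S₁} {w : List A}
    (h : ∀ a ∈ w, f a = g a) : extF d f w = extF d g w := by
  cases w with
  | nil => rfl
  | cons a l =>
    simp only [extF]
    rw [h a (by simp)]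
    have : ∀ (l' : List A), (∀ a ∈ l', f a = g a) → ∀ s : S₁,
        l'.foldl (fun s b => s * f b) s = l'.foldl (fun s b => s * g b) s := by
      intro l' hl'
      induction l' with
      | nil => intro s; rfl
      | cons b l' ih =>
        intro s
        simp only [List.foldl_cons]
        rw [hl' b (by simp), ih (fun a ha => hl' a (by simp [ha]))]
    exact this l (fun a ha => h a (by simp [ha])) _

private theorem map_extF [Semigroup S₁] [Semigroup S₂] (ρ : S₁ →ₙ* S₂) (d : S₁) (d' : S₂)
    (f : A → S₁) {w : List A} (hw : w ≠ []) :
    ρ (extF d f w) = extF d' (fun a => ρ (f a)) w := by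
  obtain ⟨a, l, rfl⟩ := List.exists_cons_of_ne_nil hw
  simp only [extF]
  have : ∀ (l' : List A) (s : S₁),
      ρ (l'.foldl (fun s b => s * f b) s) = l'.foldl (fun s b => s * ρ (f b)) (ρ s) := by
    intro l'
    induction l' with
    | nil => intro s; rfl
    | cons b l' ih => intro s; simp only [List.foldl_cons]; rw [ih, map_mul]
  exact this l (f a)

private theorem constraint_eq_extF [Semigroup S₁] {μ : List A → S₁}
    (hμ : ∀ u v : List A, u ≠ [] → v ≠ [] → μ (u ++ v) = μ u * μ v)
    (d : S₁) {w : List A} (hw : w ≠ []) :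
    μ w = extF d (fun a => μ [a]) w := by
  induction w with
  | nil => exact absurd rfl hw
  | cons a l ih =>
    cases l with
    | nil => rfl
    | cons b l =>
      rw [show a :: b :: l = [a] ++ (b :: l) from rfl,
        hμ [a] (b :: l) (by simp) (by simp),
        extF_append d _ (by simp) (by simp), ih (by simp)]
      rfl

end Aux

/-- If a finite semigroup `S` is nice for a family `𝓔` of word
equations and `ρ : S → S'` is a surjective semigroup homomorphism, then `S'`
is nice for `𝓔`. -/
theorem stmt4 (E : ∀ (C X : Type), List (C ⊕ X) → List (C ⊕ X) → Prop)
    (S S' : Type) [Semigroup S] [Finite S] [Semigroup S']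
    (hS : Nice S E) (ρ : S →ₙ* S') (hρ : Function.Surjective ρ) :
    Nice S' E := by
  intro C X iC iX U V hE hU hV μ' hμ' hinf n
  -- a basepoint of S and a section of ρ
  obtain ⟨s0, -⟩ := hρ (μ' [])
  set g : S' → S := fun s' => (hρ s').choose with hg
  have hgρ : ∀ s', ρ (g s') = s' := fun s' => (hρ s').choose_spec
  -- the S-image of a substitution
  set Φ : (X → List C) → X → S :=
    fun σ x => extF s0 (fun a => g (μ' [a])) ((σ x).map Sum.inl) with hΦ
  -- pigeonhole: some Φ-fiber of the solution set is infinite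
  haveI : Infinite {σ : X → List C // IsSolutionC U V μ' σ} := by
    rw [← Set.coe_setOf]; exact hinf.to_subtype
  obtain ⟨τ, hτ⟩ := Finite.exists_infinite_fiber
    (fun σ : {σ : X → List C // IsSolutionC U V μ' σ} => Φ σ.1)
  have hclass : {σ : X → List C | IsSolutionC U V μ' σ ∧ Φ σ = τ}.Infinite := by
    haveI := hτ
    exact Set.infinite_of_injective_forall_mem
      (f := fun p : ((fun σ : {σ : X → List C // IsSolutionC U V μ' σ} => Φ σ.1) ⁻¹' {τ})
        => (p.1.1 : X → List C))
      (fun p q hpq => Subtype.ext (Subtype.ext hpq))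
      (fun p => ⟨p.1.2, p.2⟩)
  obtain ⟨σ0, hσ0sol, hσ0Φ⟩ := hclass.nonempty
  -- the lifted constraint
  set f0 : C ⊕ X → S := Sum.elim (fun c => g (μ' [Sum.inl c])) τ with hf0
  set μ : List (C ⊕ X) → S := extF s0 f0 with hμdef
  have hμconstr : IsConstraint μ := fun u v hu hv => extF_append s0 f0 hu hv
  -- ρ ∘ μ = μ' on nonempty words
  have hρf0 : ∀ a : C ⊕ X, ρ (f0 a) = μ' [a] := by
    rintro (c | x)
    · exact hgρ _
    · have hx0 : (σ0 x).map (Sum.inl : C → C ⊕ X) ≠ [] := by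
        simp [List.map_eq_nil_iff, hσ0sol.1.1 x]
      have h1 : ρ (Φ σ0 x) = μ' [Sum.inr x] := by
        rw [hΦ, map_extF ρ s0 (μ' []) _ hx0]
        simp only [hgρ]
        rw [← constraint_eq_extF hμ' (μ' []) hx0]
        exact hσ0sol.2 x
      have : Φ σ0 x = τ x := congrFun hσ0Φ x
      simpa [this, hf0] using h1
  have hρμ : ∀ w : List (C ⊕ X), w ≠ [] → ρ (μ w) = μ' w := by
    intro w hw
    rw [hμdef, map_extF ρ s0 (μ' []) f0 hw,
      extF_congr (μ' []) (fun a _ => hρf0 a), ← constraint_eq_extF hμ' (μ' []) hw]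
  -- each σ in the chosen class is a μ-solution
  have hsub : {σ : X → List C | IsSolutionC U V μ' σ ∧ Φ σ = τ} ⊆
      {σ : X → List C | IsSolutionC U V μ σ} := by
    rintro σ ⟨hsol, hΦσ⟩
    refine ⟨hsol.1, fun x => ?_⟩
    have hagree : ∀ a ∈ (σ x).map (Sum.inl : C → C ⊕ X), f0 a = g (μ' [a]) := by
      intro a ha
      obtain ⟨c, -, rfl⟩ := List.mem_map.1 ha
      rfl
    have h1 : μ ((σ x).map Sum.inl) = Φ σ x := extF_congr s0 hagree
    rw [h1, congrFun hΦσ x]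
    rfl
  have hinf2 : {σ : X → List C | IsSolutionC U V μ σ}.Infinite := hclass.mono hsub
  obtain ⟨σ, hσ, hexp⟩ := hS C X U V hE hU hV μ hμconstr hinf2 n
  refine ⟨σ, ⟨hσ.1, fun x => ?_⟩, hexp⟩
  have hx : (σ x).map (Sum.inl : C → C ⊕ X) ≠ [] := by
    simp [List.map_eq_nil_iff, hσ.1.1 x]
  rw [← hρμ _ hx, hσ.2 x, hρμ _ (by simp)]

end WordEq
end

section
/- Let B₂ be the five-element Brandt semigroup, realized concretely as the multiplicative semigroup {E₁₂, E₂₁, E₁₁, E₂₂, 0} of 2×2 rational matrices, where Eᵢⱼ denotes the matrix unit with entry 1 in position (i,j) and 0 elsewhere. Then every proper subsemigroup S ⊊ B₂ satisfies the identity (x y)^ω = y^ω (x y)^ω for all x, y ∈ S, i.e., S lies in the variety DLG. -/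
namespace WordEq

variable {C X S : Type*}

/-- The five-element Brandt semigroup `B₂`, realized as a set of 2×2 rational
matrices (a subsemigroup of the multiplicative semigroup of matrices). -/
def B2 : Set (Matrix (Fin 2) (Fin 2) ℚ) :=
  {Matrix.single 0 1 1, Matrix.single 1 0 1,
   Matrix.single 0 0 1, Matrix.single 1 1 1, 0}


open Matrix in
private lemma tab (i j k l : Fin 2) :
    single i j (1:ℚ) * single k l (1:ℚ) =
      if j = k then single i l 1 else 0 := by
  by_cases h : j = k
  · subst h; rw [if_pos rfl, single_mul_single_same, one_mul]
  · rw [if_neg h, Matrix.single_mul_single_of_ne (h := h)]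

private lemma cube {u : Matrix (Fin 2) (Fin 2) ℚ} (hu : u ∈ B2) :
    u * u * u = u * u := by
  rcases hu with h | h | h | h | h <;> subst h <;> simp [tab]

private lemma spow_mem {u : Matrix (Fin 2) (Fin 2) ℚ}
    (hc : u * u * u = u * u) (n : ℕ) : spow u n = u ∨ spow u n = u * u := by
  induction n with
  | zero => left; rfl
  | succ n ih =>
    right
    rcases ih with h | h <;> simp [spow, h, hc]

private lemma omega_sq {u e : Matrix (Fin 2) (Fin 2) ℚ}
    (hc : u * u * u = u * u) (he : IsOmega u e) : e = u * u := by
  obtain ⟨⟨n, hn⟩, hid⟩ := he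
  rcases spow_mem hc n with h | h
  · rw [hn] at h; subst h; exact hid.symm
  · rw [hn] at h; exact h

/-- Every proper subsemigroup `S ⊊ B₂` of the Brandt semigroup
satisfies the identity `(xy)^ω = y^ω (xy)^ω`, i.e. lies in the variety DLG. -/
theorem stmt9 (S : Set (Matrix (Fin 2) (Fin 2) ℚ))
    (hsub : S ⊆ B2) (hproper : S ≠ B2)
    (hmul : ∀ x ∈ S, ∀ y ∈ S, x * y ∈ S) :
    ∀ x ∈ S, ∀ y ∈ S, ∀ e f : Matrix (Fin 2) (Fin 2) ℚ,
      IsOmega (x * y) e → IsOmega y f → e = f * e := by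
  intro x hx y hy e f he hf
  have hxyB : x * y ∈ B2 := hsub (hmul x hx y hy)
  have hyB : y ∈ B2 := hsub hy
  have hxB : x ∈ B2 := hsub hx
  have he' : e = (x * y) * (x * y) := omega_sq (cube hxyB) he
  have hf' : f = y * y := omega_sq (cube hyB) hf
  subst he' hf'
  have hfull : Matrix.single 0 1 (1:ℚ) ∈ S →
      Matrix.single 1 0 (1:ℚ) ∈ S → False := by
    intro hA hB
    apply hproper
    apply Set.Subset.antisymm hsub
    intro z hz
    rcases hz with h | h | h | h | h <;> subst h
    · exact hA
    · exact hB
    · have := hmul _ hA _ hB; simpa [tab] using this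
    · have := hmul _ hB _ hA; simpa [tab] using this
    · have := hmul _ hA _ hA; simpa [tab] using this
  rcases hxB with h | h | h | h | h <;> subst h <;>
    rcases hyB with h | h | h | h | h <;> subst h <;>
      first
        | exact (hfull hx hy).elim
        | exact (hfull hy hx).elim
        | simp [tab]

end WordEq
end

section
/- For a finite semigroup S the following are equivalent: (1) every regular ∼_D-class D of S is a right group, i.e., D is closed under multiplication and y^ω x = x for all x, y ∈ D; (2) every regular ∼_L-class L of S is a group, i.e., L is closed under multiplication and, with this multiplication, L has an identity element and every element of L has an inverse in L. -/
namespace WordEq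

variable {C X S : Type*}

/-- `x ≤_L y` iff `x ∈ S¹y`. -/
def leL [Mul S] (x y : S) : Prop := x = y ∨ ∃ u, x = u * y

/-- `x ≤_R y` iff `x ∈ yS¹`. -/
def leR [Mul S] (x y : S) : Prop := x = y ∨ ∃ u, x = y * u

/-- `x ≤_J y` iff `x ∈ S¹yS¹`. -/
def leJ [Mul S] (x y : S) : Prop :=
  x = y ∨ (∃ u, x = u * y) ∨ (∃ v, x = y * v) ∨ (∃ u v, x = u * y * v)

/-- Green's relation `∼_L`. -/
def eqL [Mul S] (x y : S) : Prop := leL x y ∧ leL y x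

/-- Green's relation `∼_R`. -/
def eqR [Mul S] (x y : S) : Prop := leR x y ∧ leR y x

/-- Green's relation `∼_J`. -/
def eqJ [Mul S] (x y : S) : Prop := leJ x y ∧ leJ y x

/-- Green's relation `∼_D = ∼_L ∘ ∼_R`. -/
def eqD [Mul S] (x y : S) : Prop := ∃ z, eqL x z ∧ eqR z y


section Aux

variable {T : Type} [Semigroup T]

theorem spow_succ (u : T) (n : ℕ) : spow u (n+1) = spow u n * u := rfl

theorem spow_add (u : T) (m n : ℕ) : spow u (m + n + 1) = spow u m * spow u n := by
  induction n with
  | zero => rfl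
  | succ n ih =>
      have h : m + (n+1) + 1 = (m + n + 1) + 1 := by omega
      rw [h, spow_succ, ih, spow_succ, mul_assoc]

theorem spow_comm (u : T) (n : ℕ) : spow u (n+1) = u * spow u n := by
  have := spow_add u 0 n
  simpa [spow] using this

theorem idem_mult (u : T) (k : ℕ) (hk : spow u k * spow u k = spow u k) :
    ∀ m, spow u (k + m * (k+1)) = spow u k := by
  intro m
  induction m with
  | zero => simp
  | succ m ih =>
      have h : k + (m+1) * (k+1) = (k + m * (k+1)) + k + 1 := by ring
      rw [h, spow_add, ih, hk]

theorem exists_idem [Finite T] (u : T) :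
    ∃ k, spow u k * spow u k = spow u k := by
  obtain ⟨i, j, hlt, hij⟩ : ∃ i j, i < j ∧ spow u i = spow u j := by
    obtain ⟨i, j, hne, hij⟩ := Finite.exists_ne_map_eq_of_infinite (fun n => spow u n)
    rcases Nat.lt_or_ge i j with h | h
    · exact ⟨i, j, h, hij⟩
    · exact ⟨j, i, by omega, hij.symm⟩
  have key : ∀ m, spow u (i + (j - i) + m) = spow u (i + m) := by
    intro m
    induction m with
    | zero =>
        have h1 : i + (j - i) + 0 = j := by omega
        have h2 : i + 0 = i := rfl
        rw [h1, h2]; exact hij.symm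
    | succ m ih =>
        have h1 : i + (j-i) + (m+1) = (i + (j-i) + m) + 1 := by omega
        rw [h1, spow_succ, ih]; rfl
  have key2 : ∀ k m, spow u (i + m + k * (j-i)) = spow u (i + m) := by
    intro k
    induction k with
    | zero => intro m; simp
    | succ k ih =>
        intro m
        have h1 : i + m + (k+1) * (j-i) = i + (j-i) + (m + k * (j-i)) := by ring
        rw [h1, key, ← Nat.add_assoc]
        exact ih m
  set d := j - i with hd
  have hd1 : 1 ≤ d := by omega
  obtain ⟨P, hPdef⟩ : ∃ P, P = (i+1) * d := ⟨_, rfl⟩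
  have hPi : i + 1 ≤ P := by
    calc i + 1 = (i+1) * 1 := (Nat.mul_one _).symm
    _ ≤ (i+1) * d := Nat.mul_le_mul_left _ hd1
    _ = P := hPdef.symm
  refine ⟨P - 1, ?_⟩
  rw [← spow_add]
  have h3 : (P-1) + (P-1) + 1 = i + ((P-1) - i) + (i+1) * d := by
    rw [← hPdef]; omega
  rw [h3, key2 (i+1) ((P-1) - i)]
  have h4 : i + ((P-1) - i) = P - 1 := by omega
  rw [h4]

theorem leL_refl (x : T) : leL x x := Or.inl rfl

theorem leL_mul (x y : T) : leL (x * y) y := Or.inr ⟨x, rfl⟩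

theorem leL_trans {x y z : T} : leL x y → leL y z → leL x z := by
  rintro (rfl | ⟨u, rfl⟩) (rfl | ⟨v, rfl⟩)
  · exact Or.inl rfl
  · exact Or.inr ⟨v, rfl⟩
  · exact Or.inr ⟨u, rfl⟩
  · exact Or.inr ⟨u * v, (mul_assoc u v z).symm⟩

theorem leR_trans {x y z : T} : leR x y → leR y z → leR x z := by
  rintro (rfl | ⟨u, rfl⟩) (rfl | ⟨v, rfl⟩)
  · exact Or.inl rfl
  · exact Or.inr ⟨v, rfl⟩
  · exact Or.inr ⟨u, rfl⟩
  · exact Or.inr ⟨v * u, mul_assoc z v u⟩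

theorem eqL_refl (x : T) : eqL x x := ⟨Or.inl rfl, Or.inl rfl⟩
theorem eqR_refl (x : T) : eqR x x := ⟨Or.inl rfl, Or.inl rfl⟩
theorem eqL_symm {x y : T} (h : eqL x y) : eqL y x := ⟨h.2, h.1⟩
theorem eqR_symm {x y : T} (h : eqR x y) : eqR y x := ⟨h.2, h.1⟩
theorem eqL_trans {x y z : T} (h : eqL x y) (h' : eqL y z) : eqL x z :=
  ⟨leL_trans h.1 h'.1, leL_trans h'.2 h.2⟩
theorem eqR_trans {x y z : T} (h : eqR x y) (h' : eqR y z) : eqR x z :=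
  ⟨leR_trans h.1 h'.1, leR_trans h'.2 h.2⟩

theorem left_stab [Finite T] {b p t : T} (h : b = p * b * t) :
    ∃ k, spow p k * b = b := by
  have iter : ∀ k, b = spow p k * b * spow t k := by
    intro k; induction k with
    | zero => exact h
    | succ k ih =>
        calc b = p * b * t := h
        _ = p * (spow p k * b * spow t k) * t := by rw [← ih]
        _ = spow p (k+1) * b * spow t (k+1) := by
              rw [spow_comm p k, spow_succ t k]; simp only [mul_assoc]
  obtain ⟨k₁, h₁⟩ := exists_idem p
  obtain ⟨k₂, h₂⟩ := exists_idem t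
  have e1 : spow p (k₁ + k₂ * (k₁+1)) = spow p k₁ := idem_mult p k₁ h₁ k₂
  have e2 : spow t (k₁ + k₂ * (k₁+1)) = spow t k₂ := by
    have h' : k₁ + k₂ * (k₁+1) = k₂ + k₁ * (k₂+1) := by ring
    rw [h']; exact idem_mult t k₂ h₂ k₁
  set K := k₁ + k₂ * (k₁+1) with hK
  set P := spow p K with hPd
  set Tt := spow t K with hTd
  have hP : P * P = P := by rw [e1]; exact h₁
  have hT : Tt * Tt = Tt := by rw [e2]; exact h₂
  have hb : b = P * b * Tt := iter K
  have hbT : b * Tt = b := by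
    calc b * Tt = (P * b * Tt) * Tt := by rw [← hb]
    _ = (P * b) * (Tt * Tt) := by rw [mul_assoc]
    _ = P * b * Tt := by rw [hT]
    _ = b := hb.symm
  have hPb : P * b = b := by
    calc P * b = P * (P * b * Tt) := by rw [← hb]
    _ = (P * P) * b * Tt := by simp only [mul_assoc]
    _ = P * b * Tt := by rw [hP]
    _ = b := hb.symm
  exact ⟨K, hPb⟩

theorem stabL [Finite T] {a b : T} (hab : leL a b) (hba : leJ b a) : leL b a := by
  rcases hba with h | ⟨s, h⟩ | ⟨t, h⟩ | ⟨s, t, h⟩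
  · exact Or.inl h
  · exact Or.inr ⟨s, h⟩
  · rcases hab with h' | ⟨u, h'⟩
    · exact Or.inl h'.symm
    · have hb : b = u * b * t := by
        calc b = a * t := h
        _ = u * b * t := by rw [h']
      obtain ⟨k, hk⟩ := left_stab hb
      cases k with
      | zero =>
          left
          have hk' : u * b = b := hk
          exact (h'.trans hk').symm
      | succ k =>
          right
          refine ⟨spow u k, ?_⟩
          calc b = spow u (k+1) * b := hk.symm
          _ = spow u k * (u * b) := by rw [spow_succ, mul_assoc]
          _ = spow u k * a := by rw [← h']
  · rcases hab with h' | ⟨u, h'⟩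
    · exact Or.inl h'.symm
    · have hb : b = (s * u) * b * t := by
        calc b = s * a * t := h
        _ = (s * u) * b * t := by rw [h']; simp only [mul_assoc]
      obtain ⟨k, hk⟩ := left_stab hb
      cases k with
      | zero =>
          right; refine ⟨s, ?_⟩
          have hk' : (s * u) * b = b := hk
          calc b = (s * u) * b := hk'.symm
          _ = s * (u * b) := by rw [mul_assoc]
          _ = s * a := by rw [← h']
      | succ k =>
          right; refine ⟨spow (s*u) k * s, ?_⟩
          calc b = spow (s*u) (k+1) * b := hk.symm
          _ = spow (s*u) k * ((s*u) * b) := by rw [spow_succ, mul_assoc]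
          _ = spow (s*u) k * (s * (u * b)) := by rw [mul_assoc]
          _ = spow (s*u) k * (s * a) := by rw [← h']
          _ = (spow (s*u) k * s) * a := (mul_assoc _ _ _).symm

/-- The hypothesis "(2)": every regular L-class is a group. -/
def Hyp2 (T : Type) [Semigroup T] : Prop :=
  ∀ e : T, e * e = e →
      (∀ x y : T, eqL x e → eqL y e → eqL (x * y) e) ∧
      ∃ i : T, eqL i e ∧ (∀ x : T, eqL x e → i * x = x ∧ x * i = x) ∧
        ∀ x : T, eqL x e → ∃ y : T, eqL y e ∧ x * y = i ∧ y * x = i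

theorem claimA (H : Hyp2 T) {h : T} (hh : h * h = h) :
    (∀ x : T, eqL x h → h * x = x ∧ x * h = x) ∧
    (∀ x : T, eqL x h → ∃ y : T, eqL y h ∧ x * y = h ∧ y * x = h) := by
  obtain ⟨-, i, hiL, hid, hinv⟩ := H h hh
  have hih : i = h := by
    have h1 : i * h = h := (hid h (eqL_refl h)).1
    have h2 : i * h = i := by
      rcases hiL.1 with h' | ⟨u, h'⟩
      · rw [h']; exact hh
      · rw [h', mul_assoc, hh]
    exact h2.symm.trans h1
  rw [hih] at hid hinv
  exact ⟨hid, hinv⟩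

theorem uniqueIdem (H : Hyp2 T) {p q : T} (hp : p * p = p) (hq : q * q = q)
    (hL : eqL q p) : q = p := by
  have A := (claimA H hp).1
  have B := (claimA H hq).1
  have h2 : q * p = p := (B p (eqL_symm hL)).1
  exact ((A q hL).2).symm.trans h2

theorem rightZero (H : Hyp2 T) {p q c : T} (hp : p * p = p) (hq : q * q = q)
    (hLpc : eqL p c) (hRcq : eqR c q) : q * p = p ∧ eqR p q := by
  have hqc : q * c = c := by
    rcases hRcq.1 with h | ⟨m, h⟩
    · rw [h]; exact hq
    · rw [h, ← mul_assoc, hq]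
  rcases hRcq.2 with h | ⟨n, h⟩
  · have hqp : q = p := uniqueIdem H hp hq (by rw [h]; exact eqL_symm hLpc)
    constructor
    · rw [hqp]; exact hp
    · rw [hqp]; exact eqR_refl p
  · set n₀ := n * q with hn0
    have hcn0 : c * n₀ = q := by rw [hn0, ← mul_assoc, ← h, hq]
    have hn0L : eqL n₀ q := ⟨Or.inr ⟨n, rfl⟩, Or.inr ⟨c, hcn0.symm⟩⟩
    have hA := (claimA H hq).1
    have hqn0 : q * n₀ = n₀ := (hA n₀ hn0L).1
    have hn0q : n₀ * q = n₀ := (hA n₀ hn0L).2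
    obtain ⟨nb, hnbL, hnn1, hnn2⟩ := (claimA H hq).2 n₀ hn0L
    have hp' : (n₀ * c) * (n₀ * c) = n₀ * c := by
      calc (n₀*c)*(n₀*c) = (n₀ * (c * n₀)) * c := by simp only [mul_assoc]
      _ = (n₀ * q) * c := by rw [hcn0]
      _ = n₀ * c := by rw [hn0q]
    have hLp'c : eqL (n₀ * c) c := by
      constructor
      · exact Or.inr ⟨n₀, rfl⟩
      · exact Or.inr ⟨c, by rw [← mul_assoc, hcn0]; exact hqc.symm⟩
    have hp'p : n₀ * c = p := uniqueIdem H hp hp' (eqL_trans hLp'c (eqL_symm hLpc))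
    constructor
    · rw [← hp'p, ← mul_assoc, hqn0]
    · have h1 : eqR p n₀ := by
        constructor
        · exact Or.inr ⟨c, hp'p.symm⟩
        · refine Or.inr ⟨n₀, ?_⟩
          rw [← hp'p, mul_assoc, hcn0, hn0q]
      have h2 : eqR n₀ q := by
        constructor
        · exact Or.inr ⟨n₀, hqn0.symm⟩
        · exact Or.inr ⟨nb, hnn1.symm⟩
      exact eqR_trans h1 h2

theorem regIdem {q : T} (hq : q * q = q) {z : T} (hzq : eqR z q) :
    ∃ h, h * h = h ∧ eqL h z := by
  have hqz : q * z = z := by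
    rcases hzq.1 with h | ⟨m, h⟩
    · rw [h]; exact hq
    · rw [h, ← mul_assoc, hq]
  rcases hzq.2 with h | ⟨n, h⟩
  · exact ⟨z, by rw [← h]; exact hq, eqL_refl z⟩
  · refine ⟨n * z, ?_, ?_, ?_⟩
    · calc (n*z)*(n*z) = (n * (z*n)) * z := by simp only [mul_assoc]
      _ = (n * q) * z := by rw [← h]
      _ = n * (q * z) := by rw [mul_assoc]
      _ = n * z := by rw [hqz]
    · exact Or.inr ⟨n, rfl⟩
    · refine Or.inr ⟨z, ?_⟩
      rw [← mul_assoc, ← h, hqz]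

theorem spow_leL (x : T) (n : ℕ) : leL (spow x n) x := by
  cases n with
  | zero => exact Or.inl rfl
  | succ n => exact Or.inr ⟨spow x n, rfl⟩

theorem inv_spow {h y y' : T} (hy : h * y = y) (h1 : y' * y = h) :
    ∀ n, spow y' n * spow y n = h := by
  intro n
  induction n with
  | zero => exact h1
  | succ n ih =>
      calc spow y' (n+1) * spow y (n+1) = (y' * spow y' n) * (spow y n * y) := by
            rw [spow_comm y' n, spow_succ y n]
      _ = y' * ((spow y' n * spow y n) * y) := by simp only [mul_assoc]
      _ = y' * (h * y) := by rw [ih]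
      _ = y' * y := by rw [hy]
      _ = h := h1

end Aux

/-- For a finite semigroup `S` the following are equivalent:
(1) every regular `∼_D`-class of `S` is a right group (closed under
multiplication and satisfying `y^ω x = x`);
(2) every regular `∼_L`-class of `S` is a group (closed under multiplication
and, with this multiplication, having an identity and inverses). -/
theorem stmt11 (S : Type) [Semigroup S] [Finite S] :
    (∀ e : S, e * e = e →
      ∀ x y : S, eqD x e → eqD y e →
        eqD (x * y) e ∧ ∀ f : S, IsOmega y f → f * x = x) ↔
    (∀ e : S, e * e = e →
      (∀ x y : S, eqL x e → eqL y e → eqL (x * y) e) ∧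
      ∃ i : S, eqL i e ∧ (∀ x : S, eqL x e → i * x = x ∧ x * i = x) ∧
        ∀ x : S, eqL x e → ∃ y : S, eqL y e ∧ x * y = i ∧ y * x = i) := by
  constructor
  · -- (1) → (2)
    intro H1 e he
    have heL : eqL e e := eqL_refl e
    have eDof : ∀ x : S, eqL x e → eqD x e := fun x hx => ⟨e, hx, eqR_refl e⟩
    have heD : eqD e e := eDof e heL
    have eid : ∀ x : S, eqL x e → e * x = x := by
      intro x hx
      exact (H1 e he x e (eDof x hx) heD).2 e ⟨⟨0, rfl⟩, he⟩
    have xe : ∀ x : S, leL x e → x * e = x := by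
      intro x hx
      rcases hx with h | ⟨u, h⟩
      · rw [h]; exact he
      · rw [h, mul_assoc, he]
    refine ⟨?_, e, heL, fun x hx => ⟨eid x hx, xe x hx.1⟩, ?_⟩
    · -- closure
      intro x y hxe hye
      constructor
      · exact leL_trans (leL_mul x y) hye.1
      · have hD : eqD (x*y) e := (H1 e he x y (eDof x hxe) (eDof y hye)).1
        obtain ⟨z, hz1, hz2⟩ := hD
        have hJ : leJ e (x*y) := by
          rcases hz2.2 with h | ⟨v, h⟩
          · rcases hz1.2 with h' | ⟨u, h'⟩
            · exact Or.inl (h.trans h')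
            · exact Or.inr (Or.inl ⟨u, h.trans h'⟩)
          · rcases hz1.2 with h' | ⟨u, h'⟩
            · exact Or.inr (Or.inr (Or.inl ⟨v, by rw [h, h']⟩))
            · exact Or.inr (Or.inr (Or.inr ⟨u, v, by rw [h, h']⟩))
        exact stabL (leL_trans (leL_mul x y) hye.1) hJ
    · -- inverses
      intro x hx
      obtain ⟨n, hn⟩ := exists_idem x
      have hge : spow x n * e = e :=
        (H1 e he e x heD (eDof x hx)).2 (spow x n) ⟨⟨n, rfl⟩, hn⟩
      have hgg : spow x n * e = spow x n := by
        cases n with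
        | zero => exact xe x hx.1
        | succ n => rw [spow_succ, mul_assoc, xe x hx.1]
      have hxne : spow x n = e := hgg.symm.trans hge
      cases n with
      | zero =>
          have hx' : x = e := hxne
          exact ⟨e, heL, by rw [hx']; exact he, by rw [hx']; exact he⟩
      | succ n =>
          refine ⟨spow x n, ⟨leL_trans (spow_leL x n) hx.1, ?_⟩, ?_, ?_⟩
          · exact Or.inr ⟨x, by rw [← hxne]; exact spow_comm x n⟩
          · rw [← spow_comm]; exact hxne
          · exact hxne
  · -- (2) → (1)
    intro H2 e he x y hxD hyD
    obtain ⟨z, hxz, hze⟩ := hxD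
    obtain ⟨w, hyw, hwe⟩ := hyD
    obtain ⟨p, hp, hpz⟩ := regIdem he hze
    obtain ⟨q, hq, hqw⟩ := regIdem he hwe
    have hpE := rightZero H2 hp he hpz hze
    have hqE := rightZero H2 hq he hqw hwe
    have hpq : eqR p q := eqR_trans hpE.2 (eqR_symm hqE.2)
    have h1 := rightZero H2 hp hq (eqL_refl p) hpq
    have h2 := rightZero H2 hq hp (eqL_refl q) (eqR_symm hpq)
    have hLxp : eqL x p := eqL_trans hxz (eqL_symm hpz)
    have hLyq : eqL y q := eqL_trans hyw (eqL_symm hqw)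
    have hApx := (claimA H2 hp).1 x hLxp
    have hAqy := (claimA H2 hq).1 y hLyq
    obtain ⟨x', hx'L, hxx', hx'x⟩ := (claimA H2 hp).2 x hLxp
    constructor
    · refine ⟨w, eqL_trans ?_ hyw, hwe⟩
      constructor
      · exact leL_mul x y
      · refine Or.inr ⟨x', ?_⟩
        have hpy : p * y = y := by rw [← hAqy.1, ← mul_assoc, h2.1]
        calc y = p * y := hpy.symm
        _ = (x' * x) * y := by rw [← hx'x]
        _ = x' * (x * y) := by rw [mul_assoc]
    · intro f hf
      obtain ⟨⟨m, hm⟩, hff⟩ := hf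
      obtain ⟨y', hy'L, hyy', hy'y⟩ := (claimA H2 hq).2 y hLyq
      have hfq : f = q := by
        apply uniqueIdem H2 hq hff
        constructor
        · rw [← hm]; exact leL_trans (spow_leL y m) hLyq.1
        · refine Or.inr ⟨spow y' m, ?_⟩
          rw [← hm]; exact (inv_spow hAqy.1 hy'y m).symm
      rw [hfq, ← hApx.1, ← mul_assoc, h1.1]

end WordEq
end

section
/- Let S be a finite semigroup satisfying the identity (x y)^ω = y^ω (x y)^ω for all x, y ∈ S (i.e., S ∈ DLG). Then for all x, u, v ∈ S: if u^ω x = x and v^ω x = x, then (u v)^ω x = x. (Thus the set of ∼_L-stabilizers of x is closed under multiplication.) -/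
namespace WordEq

variable {C X S : Type*}

section Aux
variable {S : Type*} [Semigroup S]

lemma spow_add_s14 (s : S) (a b : ℕ) : spow s (a + b + 1) = spow s a * spow s b := by
  induction b with
  | zero => rfl
  | succ b ih =>
      show spow s (a + b + 1) * s = spow s a * (spow s b * s)
      rw [ih, mul_assoc]

lemma spow_comm_s14 (s : S) (k : ℕ) : s * spow s k = spow s k * s := by
  induction k with
  | zero => rfl
  | succ k ih =>
      show s * (spow s k * s) = spow s (k+1) * s
      rw [← mul_assoc, ih]; rfl

lemma spow_conj (a b : S) (k : ℕ) : spow (a*b) k * a = a * spow (b*a) k := by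
  induction k with
  | zero => exact mul_assoc a b a
  | succ k ih =>
      show spow (a*b) k * (a*b) * a = a * (spow (b*a) k * (b*a))
      rw [mul_assoc (spow (a*b) k) (a*b) a, mul_assoc a b a, ← mul_assoc (spow (a*b) k), ih, mul_assoc]

lemma spow_split (a b : S) (k : ℕ) :
    spow (a*b) (k+1) = a * (spow (b*a) k * b) := by
  show spow (a*b) k * (a*b) = _
  rw [← mul_assoc, spow_conj, mul_assoc]

lemma spow_idem_mul (s q : S) (n : ℕ) (hn : spow s n = q) (hq : q * q = q) :
    ∀ k, spow s (n + k * (n+1)) = q := by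
  intro k
  induction k with
  | zero => simpa using hn
  | succ k ih =>
      have e : n + (k+1) * (n+1) = (n + k * (n+1)) + n + 1 := by ring
      rw [e, spow_add_s14, ih, hn, hq]

lemma spow_stab (s : S) (i p : ℕ) (hp : spow s i = spow s (i + p)) :
    ∀ k t, spow s (i + (t + k * p)) = spow s (i + t) := by
  have hshift : ∀ t, spow s (i + t) = spow s ((i + p) + t) := by
    intro t
    induction t with
    | zero => simpa using hp
    | succ t ih =>
        show spow s ((i + t) + 1) = spow s (((i+p) + t) + 1)
        show spow s (i + t) * s = spow s ((i+p) + t) * s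
        rw [ih]
  intro k
  induction k with
  | zero => simp
  | succ k ih =>
      intro t
      have e : t + (k+1) * p = (t + p) + k * p := by ring
      rw [e, ih (t + p)]
      have e2 : i + (t + p) = (i + p) + t := by ring
      rw [e2, ← hshift]

lemma omega_exists {S : Type*} [Semigroup S] [Finite S] (s : S) : ∃ e : S, IsOmega s e := by
  obtain ⟨i0, j0, hne, heq⟩ := Finite.exists_ne_map_eq_of_infinite (fun n : ℕ => spow s n)
  obtain ⟨i, j, hij, h⟩ : ∃ i j : ℕ, i < j ∧ spow s i = spow s j := by
    rcases lt_or_gt_of_ne hne with hlt | hgt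
    · exact ⟨i0, j0, hlt, heq⟩
    · exact ⟨j0, i0, hgt, heq.symm⟩
  set p := j - i with hpdef
  have hp : spow s i = spow s (i + p) := by
    have : i + p = j := by omega
    rw [this, h]
  have hppos : 0 < p := by omega
  obtain ⟨Q, hQ⟩ : ∃ Q, Q = (i+1) * p := ⟨_, rfl⟩
  have h1 : i + 1 ≤ Q := by
    rw [hQ]
    calc i + 1 = (i+1) * 1 := (mul_one _).symm
    _ ≤ (i+1) * p := Nat.mul_le_mul_left _ hppos
  set M := Q - 1 with hMdef
  have key : spow s (M + M + 1) = spow s M := by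
    have h2 : M + M + 1 = i + ((M - i) + (i+1) * p) := by rw [← hQ]; omega
    rw [h2, spow_stab s i p hp (i+1) (M - i)]
    congr 1
    omega
  exact ⟨spow s M, ⟨M, rfl⟩, by rw [← spow_add_s14]; exact key⟩

lemma absorb_left (p B : S) (hp : p * p = p) :
    ∀ k, p * spow (p*B) k = spow (p*B) k := by
  intro k
  induction k with
  | zero => show p * (p * B) = p * B; rw [← mul_assoc, hp]
  | succ k ih =>
      show p * (spow (p*B) k * (p*B)) = spow (p*B) k * (p*B)
      rw [← mul_assoc, ih]

end Aux

section Main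
variable {S : Type} [Semigroup S] [Finite S]

lemma lemmaStar
    (hDLG : ∀ x y e f : S, IsOmega (x * y) e → IsOmega y f → e = f * e)
    (p q A B : S) (hp : p * p = p) (hq : q * q = q)
    (hfact : A * (p * B) = q) : p * q = q := by
  obtain ⟨r, hr⟩ := omega_exists (p * B)
  have h1 : q = r * q := hDLG A (p*B) q r ⟨⟨0, hfact⟩, hq⟩ hr
  obtain ⟨⟨n, hn⟩, hrid⟩ := hr
  have h2 : p * r = r := by rw [← hn]; exact absorb_left p B hp n
  calc p * q = p * (r * q) := by rw [← h1]
    _ = (p * r) * q := (mul_assoc _ _ _).symm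
    _ = r * q := by rw [h2]
    _ = q := h1.symm

lemma lemmaA
    (hDLG : ∀ x y e f : S, IsOmega (x * y) e → IsOmega y f → e = f * e)
    (c d g h : S) (hg : IsOmega c g) (hh : IsOmega (c*d) h) : g * h = h := by
  obtain ⟨r, hr⟩ := omega_exists (d * c)
  have h1 : r = g * r := hDLG d c r g hr hg
  obtain ⟨⟨nh, hnh⟩, hhid⟩ := hh
  obtain ⟨⟨nr, hnr⟩, hrid⟩ := hr.imp id id
  obtain ⟨ng, hng⟩ := hg.1
  obtain ⟨T, hTge, hTz⟩ : ∃ T, nr + 2 ≤ T ∧ spow (c*d) T = h := by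
    refine ⟨nh + (nr+2) * (nh+1), ?_, spow_idem_mul (c*d) h nh hnh hhid (nr+2)⟩
    calc nr + 2 = (nr+2) * 1 := (mul_one _).symm
      _ ≤ (nr+2) * (nh+1) := Nat.mul_le_mul_left _ (Nat.succ_pos _)
      _ ≤ nh + (nr+2) * (nh+1) := Nat.le_add_left _ _
  obtain ⟨W, hW⟩ : ∃ W, T = nr + W + 1 + 1 := ⟨T - 1 - nr - 1, by omega⟩
  have e1 : h = c * (r * (spow (d*c) W * d)) := by
    rw [← hTz, hW, spow_split, spow_add_s14, hnr, mul_assoc]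
  have hgc : g * c = c * g := by rw [← hng, ← spow_comm_s14]
  calc g * h = g * (c * (r * (spow (d*c) W * d))) := by rw [← e1]
    _ = (g * c) * (r * (spow (d*c) W * d)) := (mul_assoc _ _ _).symm
    _ = (c * g) * (r * (spow (d*c) W * d)) := by rw [hgc]
    _ = c * (g * (r * (spow (d*c) W * d))) := mul_assoc _ _ _
    _ = c * ((g * r) * (spow (d*c) W * d)) := by rw [mul_assoc]
    _ = c * (r * (spow (d*c) W * d)) := by rw [← h1]
    _ = h := e1.symm

end Main

/-- In a finite semigroup `S` satisfying `(xy)^ω = y^ω (xy)^ω`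
(i.e. `S ∈ DLG`), if `u^ω x = x` and `v^ω x = x`, then `(uv)^ω x = x`. -/
theorem stmt14 (S : Type) [Semigroup S] [Finite S]
    (hDLG : ∀ x y e f : S, IsOmega (x * y) e → IsOmega y f → e = f * e) :
    ∀ x u v eu ev euv : S, IsOmega u eu → IsOmega v ev → IsOmega (u * v) euv →
      eu * x = x → ev * x = x → euv * x = x := by
  intro x u v eu ev euv hu hv huv hux hvx
  obtain ⟨⟨a, ha⟩, hue⟩ := hu
  obtain ⟨⟨b, hb⟩, hve⟩ := hv
  have hA : spow u (a + a + 1) = eu := by rw [spow_add_s14, ha, hue]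
  have hB : spow v (b + b + 1) = ev := by rw [spow_add_s14, hb, hve]
  have hfact : eu * ev = spow u (a+a) * ((u*v) * spow v (b+b)) := by
    calc eu * ev = spow u (a+a+1) * spow v (b+b+1) := by rw [hA, hB]
    _ = (spow u (a+a) * u) * (v * spow v (b+b)) := by
        rw [show spow v (b+b+1) = v * spow v (b+b) from (spow_comm_s14 v (b+b)).symm,
          show spow u (a+a+1) = spow u (a+a) * u from rfl]
    _ = spow u (a+a) * ((u*v) * spow v (b+b)) := by rw [mul_assoc, ← mul_assoc u v]
  have hcd : ((u*v) * spow v (b+b)) * spow u (a+a) = (u*v) * (spow v (b+b) * spow u (a+a)) :=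
    mul_assoc _ _ _
  obtain ⟨z, ⟨⟨m, hm⟩, hzid⟩⟩ := omega_exists (eu * ev)
  have hsx : (eu * ev) * x = x := by rw [mul_assoc, hvx, hux]
  have hall : ∀ k, spow (eu*ev) k * x = x := by
    intro k
    induction k with
    | zero => exact hsx
    | succ k ih =>
        show (spow (eu*ev) k * (eu*ev)) * x = x
        rw [mul_assoc, hsx, ih]
  have hzx : z * x = x := by rw [← hm]; exact hall m
  obtain ⟨h, hh⟩ := omega_exists ((u*v) * (spow v (b+b) * spow u (a+a)))
  have hgh : euv * h = h := lemmaA hDLG (u*v) (spow v (b+b) * spow u (a+a)) euv h huv hh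
  obtain ⟨⟨nh, hnh⟩, hhid⟩ := hh
  obtain ⟨T, hTge, hTz⟩ : ∃ T, nh + 2 ≤ T ∧ spow (eu*ev) T = z := by
    refine ⟨m + (nh+2)*(m+1), ?_, spow_idem_mul _ z m hm hzid (nh+2)⟩
    calc nh + 2 = (nh+2) * 1 := (mul_one _).symm
      _ ≤ (nh+2) * (m+1) := Nat.mul_le_mul_left _ (Nat.succ_pos _)
      _ ≤ m + (nh+2) * (m+1) := Nat.le_add_left _ _
  obtain ⟨W, hW⟩ : ∃ W, T = nh + W + 1 + 1 := ⟨T - nh - 2, by omega⟩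
  have hzfact : z = spow u (a+a) * (h *
      (spow ((u*v) * (spow v (b+b) * spow u (a+a))) W * ((u*v) * spow v (b+b)))) := by
    rw [← hTz, hW, hfact, spow_split, hcd, spow_add_s14, hnh, mul_assoc]
  have hhz : h * z = z :=
    lemmaStar hDLG h z (spow u (a+a))
      (spow ((u*v) * (spow v (b+b) * spow u (a+a))) W * ((u*v) * spow v (b+b)))
      hhid hzid hzfact.symm
  have hgz : euv * z = z := by rw [← hhz, ← mul_assoc, hgh]
  rw [← hzx, ← mul_assoc, hgz]

end WordEq
end

section
/- Let S be a finite semigroup. If S satisfies the identity (x y)^ω = y^ω (x y)^ω for all x, y ∈ S (i.e., S ∈ DLG), then for all x, y, u ∈ S with x ∼_J y one has: u^ω x = x if and only if u^ω y = y. Conversely, if for all x, y, u ∈ S the relation x ∼_J y implies (u^ω x = x ⟺ u^ω y = y), then S satisfies (x y)^ω = y^ω (x y)^ω for all x, y ∈ S. -/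
namespace WordEq

variable {C X S : Type*}

section Aux

variable {M : Type*} [Monoid M]

lemma idem_pow {x : M} (h : x * x = x) {n : ℕ} (hn : 1 ≤ n) : x ^ n = x := by
  obtain ⟨m, rfl⟩ := Nat.exists_eq_add_of_le hn
  rw [add_comm]
  exact IsIdempotentElem.pow_succ_eq m h

lemma exists_idem_pow {M : Type*} [Monoid M] [Finite M] (a : M) :
    ∃ k : ℕ, 1 ≤ k ∧ a ^ k * a ^ k = a ^ k := by
  obtain ⟨i, j, hne, hij⟩ := Finite.exists_ne_map_eq_of_infinite (fun n : ℕ => a ^ (n + 1))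
  wlog hlt : i < j generalizing i j
  · exact this j i hne.symm hij.symm (by omega)
  have hbd : a ^ (i + 1) = a ^ ((i + 1) + (j - i)) := by
    simpa using hij.trans (by congr 1; omega)
  set b := i + 1 with hb
  set d := j - i with hd
  have hd1 : 1 ≤ d := by omega
  have step : ∀ c, b ≤ c → a ^ c = a ^ (c + d) := by
    intro c hc
    calc a ^ c = a ^ b * a ^ (c - b) := by rw [← pow_add]; congr 1; omega
    _ = a ^ (b + d) * a ^ (c - b) := by rw [← hbd]
    _ = a ^ (c + d) := by rw [← pow_add]; congr 1; omega
  have iter : ∀ t, ∀ c, b ≤ c → a ^ c = a ^ (c + t * d) := by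
    intro t
    induction t with
    | zero => simp
    | succ t ih =>
      intro c hc
      calc a ^ c = a ^ (c + t * d) := ih c hc
      _ = a ^ (c + t * d + d) := step _ (by omega)
      _ = a ^ (c + (t + 1) * d) := by congr 1; ring
  refine ⟨b * d, Nat.one_le_iff_ne_zero.2 (by positivity), ?_⟩
  rw [← pow_add]
  exact (iter b (b * d) (Nat.le_mul_of_pos_right b hd1)).symm

lemma exists_uexp (M : Type*) [Monoid M] [Finite M] :
    ∃ K : ℕ, 1 ≤ K ∧ ∀ a : M, a ^ K * a ^ K = a ^ K := by
  classical
  cases nonempty_fintype M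
  choose k hk1 hk2 using fun a : M => exists_idem_pow a
  refine ⟨∏ a : M, k a, Finset.one_le_prod' fun a _ => hk1 a, fun a => ?_⟩
  obtain ⟨m, hm⟩ := Finset.dvd_prod_of_mem k (Finset.mem_univ a)
  have hm1 : 1 ≤ m := by
    by_contra h
    have h0 : m = 0 := by omega
    have h1 := Finset.one_le_prod' (s := (Finset.univ : Finset M)) fun a _ => hk1 a
    rw [hm, h0, Nat.mul_zero] at h1
    omega
  rw [hm, pow_mul, idem_pow (hk2 a) hm1]
  exact hk2 a

lemma pow_idem_unique {a : M} {i j : ℕ} (hi : 1 ≤ i) (hj : 1 ≤ j)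
    (h1 : a ^ i * a ^ i = a ^ i) (h2 : a ^ j * a ^ j = a ^ j) : a ^ i = a ^ j := by
  calc a ^ i = (a ^ i) ^ j := (idem_pow h1 hj).symm
  _ = (a ^ j) ^ i := by rw [← pow_mul, ← pow_mul, Nat.mul_comm]
  _ = a ^ j := idem_pow h2 hi

lemma pow_swap (a b : M) (n : ℕ) : (a * b) ^ n * a = a * (b * a) ^ n := by
  induction n with
  | zero => simp
  | succ n ih =>
    calc (a * b) ^ (n + 1) * a = (a * b) * ((a * b) ^ n * a) := by
          rw [pow_succ']; simp [mul_assoc]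
    _ = (a * b) * (a * (b * a) ^ n) := by rw [ih]
    _ = a * (b * a) ^ (n + 1) := by rw [pow_succ']; simp [mul_assoc]

lemma pow_swap' (a b c : M) (n : ℕ) : (a * b) ^ n * (a * c) = a * ((b * a) ^ n * c) := by
  rw [← mul_assoc, pow_swap, mul_assoc]

lemma pow_collect (a : M) (m n : ℕ) (c : M) : a ^ m * (a ^ n * c) = a ^ (m + n) * c := by
  rw [← mul_assoc, ← pow_add]

lemma mul_pow_fix {Z W : M} (h : Z * W = W) {n : ℕ} (hn : 1 ≤ n) : Z * W ^ n = W ^ n := by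
  obtain ⟨m, rfl⟩ := Nat.exists_eq_add_of_le hn
  rw [add_comm, pow_succ', ← mul_assoc, h]

end Aux

section CoeLemmas

variable [Semigroup S]

lemma coe_spow (u : S) (n : ℕ) :
    ((spow u n : S) : WithOne S) = (u : WithOne S) ^ (n + 1) := by
  induction n with
  | zero => simp [spow]
  | succ n ih => rw [spow, WithOne.coe_mul, ih]; exact (pow_succ _ _).symm

lemma leJ_coe {a b : S} (h : leJ a b) :
    ∃ A B : WithOne S, (↑a : WithOne S) = A * ↑b * B := by
  rcases h with rfl | ⟨u, rfl⟩ | ⟨v, rfl⟩ | ⟨u, v, rfl⟩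
  · exact ⟨1, 1, by simp⟩
  · exact ⟨↑u, 1, by simp⟩
  · exact ⟨1, ↑v, by simp⟩
  · exact ⟨↑u, ↑v, by simp⟩

end CoeLemmas

lemma stmt15_fwd (S : Type) [Semigroup S] [Finite S] (K : ℕ) (hK1 : 1 ≤ K)
    (hK : ∀ A : WithOne S, A ^ K * A ^ K = A ^ K)
    (I : ∀ x y e f : S, IsOmega (x * y) e → IsOmega y f → e = f * e)
    (x y u e : S) (hxy : eqJ x y) (he : IsOmega u e) (hx : e * x = x) : e * y = y := by
  -- the identity, extended to `WithOne S`
  have hI : ∀ (A : WithOne S) (b : S),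
      (A * ↑b) ^ K = (↑b : WithOne S) ^ K * (A * ↑b) ^ K := by
    intro A b
    have hKs : K - 1 + 1 = K := by omega
    induction A using WithOne.recOneCoe with
    | one => simpa using (hK (↑b : WithOne S)).symm
    | coe a =>
      have he' : IsOmega (a * b) (spow (a * b) (K - 1)) := by
        refine ⟨⟨K - 1, rfl⟩, ?_⟩
        apply WithOne.coe_inj.mp
        rw [WithOne.coe_mul, coe_spow, hKs]
        exact hK _
      have hf' : IsOmega b (spow b (K - 1)) := by
        refine ⟨⟨K - 1, rfl⟩, ?_⟩
        apply WithOne.coe_inj.mp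
        rw [WithOne.coe_mul, coe_spow, hKs]
        exact hK _
      have := I a b _ _ he' hf'
      have hcoe := congrArg (fun s : S => (↑s : WithOne S)) this
      simp only [WithOne.coe_mul, coe_spow, hKs] at hcoe
      exact hcoe
  obtain ⟨A, B, hY⟩ := leJ_coe hxy.2
  obtain ⟨Cc, D, hX⟩ := leJ_coe hxy.1
  set E := (↑e : WithOne S) with hEdef
  have hE : E * E = E := by rw [hEdef, ← WithOne.coe_mul, he.2]
  have hEX : E * ↑x = (↑x : WithOne S) := by rw [hEdef, ← WithOne.coe_mul, hx]
  set P := A * E * Cc with hPdef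
  set R := D * B with hRdef
  have hYP : (↑y : WithOne S) = P * ↑y * R := by
    calc (↑y : WithOne S) = A * ↑x * B := hY
    _ = A * (E * ↑x) * B := by rw [hEX]
    _ = A * (E * (Cc * ↑y * D)) * B := by rw [← hX]
    _ = P * ↑y * R := by rw [hPdef, hRdef]; simp [mul_assoc]
  have hiter : ∀ j : ℕ, (↑y : WithOne S) = P ^ j * ↑y * R ^ j := by
    intro j
    induction j with
    | zero => simp
    | succ j ih =>
      calc (↑y : WithOne S) = P * ↑y * R := hYP
      _ = P * (P ^ j * ↑y * R ^ j) * R := by rw [← ih]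
      _ = P ^ (j + 1) * ↑y * R ^ (j + 1) := by
          rw [pow_succ' P, pow_succ R]; simp [mul_assoc]
  set G := P ^ K with hGdef
  have hG : G * G = G := hK P
  have hYG : (↑y : WithOne S) = G * ↑y * R ^ K := hiter K
  have hGy : G * ↑y = (↑y : WithOne S) := by
    calc G * (↑y : WithOne S) = G * (G * ↑y * R ^ K) := by rw [← hYG]
    _ = (G * G) * ↑y * R ^ K := by simp [mul_assoc]
    _ = G * ↑y * R ^ K := by rw [hG]
    _ = ↑y := hYG.symm
  -- E * C is a coe
  obtain ⟨b', hb'⟩ : ∃ b' : S, E * Cc = (↑b' : WithOne S) := by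
    induction Cc using WithOne.recOneCoe with
    | one => exact ⟨e, by simp [hEdef]⟩
    | coe c => exact ⟨e * c, by simp [hEdef, WithOne.coe_mul]⟩
  have hP' : P = A * ↑b' := by rw [hPdef, mul_assoc, hb']
  have hGEC : G = (↑b' : WithOne S) ^ K * G := by
    rw [hGdef, hP']; exact hI A b'
  have hEb : E * (↑b' : WithOne S) = ↑b' := by
    rw [← hb', ← mul_assoc, hE]
  have hEG : E * G = G := by
    calc E * G = E * ((↑b' : WithOne S) ^ K * G) := by rw [← hGEC]
    _ = (E * (↑b' : WithOne S) ^ K) * G := by rw [mul_assoc]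
    _ = (↑b' : WithOne S) ^ K * G := by rw [mul_pow_fix hEb hK1]
    _ = G := hGEC.symm
  have : E * ↑y = (↑y : WithOne S) := by
    calc E * (↑y : WithOne S) = E * (G * ↑y) := by rw [hGy]
    _ = (E * G) * ↑y := by rw [mul_assoc]
    _ = G * ↑y := by rw [hEG]
    _ = ↑y := hGy
  apply WithOne.coe_inj.mp
  rwa [WithOne.coe_mul]

lemma stmt15_bwd (S : Type) [Semigroup S] [Finite S] (K : ℕ) (hK1 : 1 ≤ K)
    (hK : ∀ A : WithOne S, A ^ K * A ^ K = A ^ K)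
    (H : ∀ x y u : S, eqJ x y → ∀ e : S, IsOmega u e → (e * x = x ↔ e * y = y))
    (x y e f : S) (he : IsOmega (x * y) e) (hf : IsOmega y f) : e = f * e := by
  have hKs : K - 1 + 1 = K := by omega
  obtain ⟨⟨n, hn⟩, hee⟩ := he
  obtain ⟨⟨m, hm⟩, hff⟩ := hf
  -- coercion facts
  have hEcoe : (↑e : WithOne S) = (↑x * ↑y : WithOne S) ^ (n + 1) := by
    rw [← hn, coe_spow, WithOne.coe_mul]
  have hEidem : (↑e : WithOne S) * ↑e = (↑e : WithOne S) := by
    rw [← WithOne.coe_mul, hee]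
  have hEK : (↑e : WithOne S) = (↑x * ↑y : WithOne S) ^ K := by
    rw [hEcoe]
    refine pow_idem_unique (by omega) hK1 ?_ (hK _)
    rw [← hEcoe]; exact hEidem
  have hFcoe : (↑f : WithOne S) = (↑y : WithOne S) ^ (m + 1) := by
    rw [← hm, coe_spow]
  have hFidem : (↑f : WithOne S) * ↑f = (↑f : WithOne S) := by
    rw [← WithOne.coe_mul, hff]
  have hFK : (↑f : WithOne S) = (↑y : WithOne S) ^ K := by
    rw [hFcoe]
    refine pow_idem_unique (by omega) hK1 ?_ (hK _)
    rw [← hFcoe]; exact hFidem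
  -- the idempotent power of y*x
  set e' : S := spow (y * x) (K - 1) with he'def
  have hE' : (↑e' : WithOne S) = (↑y * ↑x : WithOne S) ^ K := by
    rw [he'def, coe_spow, hKs, WithOne.coe_mul]
  have he' : IsOmega (y * x) e' := by
    refine ⟨⟨K - 1, rfl⟩, ?_⟩
    apply WithOne.coe_inj.mp
    rw [WithOne.coe_mul, hE']
    exact hK _
  -- e ∼_J y*e
  set t : S := spow (x * y) (2 * K - 2) with htdef
  have hT : (↑t : WithOne S) = (↑x * ↑y : WithOne S) ^ (2 * K - 1) := by
    rw [htdef, coe_spow, WithOne.coe_mul]; congr 1; omega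
  have hJ1 : leJ e (y * e) := by
    refine Or.inr (Or.inr (Or.inr ⟨x, t, ?_⟩))
    apply WithOne.coe_inj.mp
    rw [WithOne.coe_mul, WithOne.coe_mul, WithOne.coe_mul, hT, hEK]
    symm
    calc (↑x : WithOne S) * (↑y * (↑x * ↑y : WithOne S) ^ K) * (↑x * ↑y) ^ (2 * K - 1)
        = (↑x * ↑y : WithOne S) ^ 1 * ((↑x * ↑y) ^ K * (↑x * ↑y) ^ (2 * K - 1)) := by
          rw [pow_one]; simp [mul_assoc]
    _ = (↑x * ↑y : WithOne S) ^ (1 + (K + (2 * K - 1))) := by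
          rw [pow_collect, ← pow_add]; congr 1; omega
    _ = (↑x * ↑y : WithOne S) ^ (K * 3) := by congr 1; omega
    _ = ((↑x * ↑y : WithOne S) ^ K) ^ 3 := by rw [pow_mul]
    _ = (↑x * ↑y : WithOne S) ^ K := idem_pow (hK _) (by omega)
  have hJ2 : leJ (y * e) e := Or.inr (Or.inl ⟨y, rfl⟩)
  -- apply H
  have hRHS : e' * (y * e) = y * e := by
    apply WithOne.coe_inj.mp
    rw [WithOne.coe_mul, WithOne.coe_mul, hE', hEK]
    calc (↑y * ↑x : WithOne S) ^ K * (↑y * (↑x * ↑y) ^ K)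
        = ↑y * ((↑x * ↑y : WithOne S) ^ K * (↑x * ↑y) ^ K) := pow_swap' _ _ _ K
    _ = ↑y * (↑x * ↑y : WithOne S) ^ K := by rw [hK]
  have hstar_S : e' * e = e := (H e (y * e) (y * x) ⟨hJ1, hJ2⟩ e' he').mpr hRHS
  have hstar : (↑y * ↑x : WithOne S) ^ K * (↑x * ↑y : WithOne S) ^ K
      = (↑x * ↑y : WithOne S) ^ K := by
    have h0 := congrArg (fun s : S => (↑s : WithOne S)) hstar_S
    simp only [WithOne.coe_mul] at h0
    rwa [hE', hEK] at h0
  -- the descent: E = y^j * E * Q^j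
  have hbase : (↑x * ↑y : WithOne S) ^ K
      = ↑y * (↑x * ↑y : WithOne S) ^ K
        * (↑x * ((↑y * ↑x : WithOne S) ^ (K - 1) * (↑x * ↑y : WithOne S) ^ K)) := by
    symm
    calc ↑y * (↑x * ↑y : WithOne S) ^ K
          * (↑x * ((↑y * ↑x : WithOne S) ^ (K - 1) * (↑x * ↑y : WithOne S) ^ K))
        = ↑y * ((↑x * ↑y : WithOne S) ^ K
          * (↑x * ((↑y * ↑x : WithOne S) ^ (K - 1) * (↑x * ↑y : WithOne S) ^ K))) := by
          rw [mul_assoc]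
    _ = ↑y * (↑x * ((↑y * ↑x : WithOne S) ^ K
          * ((↑y * ↑x : WithOne S) ^ (K - 1) * (↑x * ↑y : WithOne S) ^ K))) := by
          rw [pow_swap']
    _ = ↑y * (↑x * ((↑y * ↑x : WithOne S) ^ (K + (K - 1)) * (↑x * ↑y : WithOne S) ^ K)) := by
          rw [pow_collect]
    _ = (↑y * ↑x : WithOne S) ^ 1
          * ((↑y * ↑x : WithOne S) ^ (K + (K - 1)) * (↑x * ↑y : WithOne S) ^ K) := by
          rw [pow_one]; simp [mul_assoc]
    _ = (↑y * ↑x : WithOne S) ^ (1 + (K + (K - 1))) * (↑x * ↑y : WithOne S) ^ K := by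
          rw [pow_collect]
    _ = (↑y * ↑x : WithOne S) ^ (K + K) * (↑x * ↑y : WithOne S) ^ K := by congr 2; omega
    _ = ((↑y * ↑x : WithOne S) ^ K * (↑y * ↑x : WithOne S) ^ K)
          * (↑x * ↑y : WithOne S) ^ K := by rw [pow_add]
    _ = (↑y * ↑x : WithOne S) ^ K * (↑x * ↑y : WithOne S) ^ K := by rw [hK]
    _ = (↑x * ↑y : WithOne S) ^ K := hstar
  set Q : WithOne S := ↑x * ((↑y * ↑x : WithOne S) ^ (K - 1) * (↑x * ↑y : WithOne S) ^ K)
    with hQdef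
  have hiter : ∀ j : ℕ,
      (↑x * ↑y : WithOne S) ^ K = (↑y : WithOne S) ^ j * (↑x * ↑y : WithOne S) ^ K * Q ^ j := by
    intro j
    induction j with
    | zero => simp
    | succ j ih =>
      calc (↑x * ↑y : WithOne S) ^ K
          = ↑y * (↑x * ↑y : WithOne S) ^ K * Q := hbase
      _ = ↑y * ((↑y : WithOne S) ^ j * (↑x * ↑y : WithOne S) ^ K * Q ^ j) * Q := by rw [← ih]
      _ = (↑y : WithOne S) ^ (j + 1) * (↑x * ↑y : WithOne S) ^ K * Q ^ (j + 1) := by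
          rw [pow_succ' (↑y : WithOne S), pow_succ Q]; simp [mul_assoc]
  have hiterK := hiter K
  -- conclude
  have hfin : (↑y : WithOne S) ^ K * (↑x * ↑y : WithOne S) ^ K = (↑x * ↑y : WithOne S) ^ K := by
    calc (↑y : WithOne S) ^ K * (↑x * ↑y : WithOne S) ^ K
        = (↑y : WithOne S) ^ K
          * ((↑y : WithOne S) ^ K * (↑x * ↑y : WithOne S) ^ K * Q ^ K) := by rw [← hiterK]
    _ = ((↑y : WithOne S) ^ K * (↑y : WithOne S) ^ K)
          * ((↑x * ↑y : WithOne S) ^ K * Q ^ K) := by simp [mul_assoc]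
    _ = (↑y : WithOne S) ^ K * ((↑x * ↑y : WithOne S) ^ K * Q ^ K) := by rw [hK]
    _ = (↑y : WithOne S) ^ K * (↑x * ↑y : WithOne S) ^ K * Q ^ K := by rw [mul_assoc]
    _ = (↑x * ↑y : WithOne S) ^ K := hiterK.symm
  apply WithOne.coe_inj.mp
  rw [WithOne.coe_mul, hEK, hFK]
  exact hfin.symm


/-- A finite semigroup `S` satisfies `(xy)^ω = y^ω (xy)^ω`
(i.e. `S ∈ DLG`) if and only if for all `x ∼_J y` and all `u` one has
`u^ω x = x ⟺ u^ω y = y`. -/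
theorem stmt15 (S : Type) [Semigroup S] [Finite S] :
    (∀ x y e f : S, IsOmega (x * y) e → IsOmega y f → e = f * e) ↔
    (∀ x y u : S, eqJ x y → ∀ e : S, IsOmega u e → (e * x = x ↔ e * y = y)) := by
  have : Finite (WithOne S) := Finite.of_equiv (S ⊕ PUnit.{1}) (Equiv.optionEquivSumPUnit S).symm
  obtain ⟨K, hK1, hK⟩ := exists_uexp (WithOne S)
  constructor
  · intro I x y u hxy e he
    exact ⟨fun hx => stmt15_fwd S K hK1 hK I x y u e hxy he hx,
           fun hy => stmt15_fwd S K hK1 hK I y x u e ⟨hxy.2, hxy.1⟩ he hy⟩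
  · intro H x y e f he hf
    exact stmt15_bwd S K hK1 hK H x y e f he hf

end WordEq
end

section
/- Let S be a finite duo semigroup, i.e., x S¹ = S¹ x for all x ∈ S (equivalently, {x} ∪ xS = {x} ∪ Sx for all x ∈ S). Then S satisfies the identity (x y)^ω = y^ω (x y)^ω for all x, y ∈ S, i.e., S lies in the variety DLG. -/
namespace WordEq

variable {C X S : Type*}

/-- A finite duo semigroup (`xS¹ = S¹x` for all `x`, i.e.
`{x} ∪ xS = {x} ∪ Sx`) satisfies `(xy)^ω = y^ω (xy)^ω`, i.e. lies in the
variety DLG. -/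
theorem stmt18 (S : Type) [Semigroup S] [Finite S]
    (hduo : ∀ x z : S, (z = x ∨ ∃ y : S, z = x * y) ↔ (z = x ∨ ∃ y : S, z = y * x)) :
    ∀ x y e f : S, IsOmega (x * y) e → IsOmega y f → e = f * e := by
  rintro x y e f ⟨⟨n, hn⟩, he⟩ ⟨⟨m, hm⟩, hf⟩
  -- anything multiplied by y on the right lands in {y} ∪ yS
  have move : ∀ b : S, b * y = y ∨ ∃ c, b * y = y * c := by
    intro b
    exact (hduo y (b * y)).mpr (Or.inr ⟨b, rfl⟩)
  -- all positive powers of x*y lie in {y} ∪ yS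
  have hR : ∀ k : ℕ, spow (x * y) k = y ∨ ∃ c, spow (x * y) k = y * c := by
    intro k
    induction k with
    | zero => simpa [spow] using move x
    | succ k ih =>
      rcases ih with h | ⟨c, h⟩
      · right; exact ⟨x * y, by simp [spow, h]⟩
      · right; exact ⟨c * (x * y), by simp [spow, h, mul_assoc]⟩
  have hE1 : e = y ∨ ∃ c, e = y * c := hn ▸ hR n
  have hee : e = e * e := he.symm
  -- e lies in {y^(k+1)} ∪ y^(k+1) S for every k
  have hP : ∀ k : ℕ, e = spow y k ∨ ∃ c, e = spow y k * c := by
    intro k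
    induction k with
    | zero => exact hE1
    | succ k ih =>
      rcases ih with h | ⟨s, h⟩ <;> rcases hE1 with h' | ⟨c, h'⟩
      · left
        rw [spow, hee]; nth_rewrite 1 [h]; rw [h']
      · right
        refine ⟨c, ?_⟩
        rw [spow, hee]; nth_rewrite 1 [h]; rw [h', mul_assoc]
      · rcases move s with hs | ⟨d, hs⟩
        · left
          rw [spow, hee]; nth_rewrite 1 [h]; rw [h', mul_assoc, hs]
        · right
          refine ⟨d, ?_⟩
          rw [spow, hee]; nth_rewrite 1 [h]; rw [h', mul_assoc, hs, ← mul_assoc]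
      · rcases move s with hs | ⟨d, hs⟩
        · right
          refine ⟨c, ?_⟩
          rw [spow, hee]; nth_rewrite 1 [h]
          rw [h', ← mul_assoc, mul_assoc _ s y, hs]
        · right
          refine ⟨d * c, ?_⟩
          rw [spow, hee]; nth_rewrite 1 [h]
          rw [h', ← mul_assoc, mul_assoc _ s y, hs, ← mul_assoc, mul_assoc _ d c]
  rcases hm ▸ hP m with h | ⟨c, h⟩
  · rw [h, hf]
  · rw [h, ← mul_assoc, hf]

end WordEq
end
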